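/- For n ≥ 1, the degree of the Stern polynomial a(n; z) equals (n − 2^{e(n)})/2, where e(n) is the 2-adic valuation of n (the largest k with 2^k dividing n). -/

import Mathlib

/-!
Writing `d(n)` for the degree, the claim is `2 d(n) + 2^{e(n)} = n`, proved by strong induction
together with monicity. The even step is immediate since `z ↦ z²` doubles degrees. In the odd
step `a(2k+1) = z a(k; z²) + a(k+1; z²)` the two summands have degrees of different parity, so
no cancellation occurs and the degree is the larger one; exactly one of `k`, `k+1` is odd, and the
odd one contributes degree `k`.
-/

open Polynomial

/-- The Stern polynomials: a(0;z)=0, a(1;z)=1, a(2n;z)=a(n;z^2),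
    a(2n+1;z)=z*a(n;z^2)+a(n+1;z^2). -/
noncomputable def stern : ℕ → Polynomial ℤ
  | 0 => 0
  | 1 => 1
  | (n+2) =>
    if _h : n % 2 = 0 then (stern (n/2+1)).comp (X^2)
    else X * (stern (n/2+1)).comp (X^2) + (stern (n/2+2)).comp (X^2)
  decreasing_by all_goals omega

namespace Polynomial

variable {R : Type*} [CommSemiring R]

lemma natDegree_comp_X_sq [NoZeroDivisors R] [Nontrivial R] (p : R[X]) :
    (p.comp (X ^ 2)).natDegree = 2 * p.natDegree := by
  rw [natDegree_comp, natDegree_X_pow, mul_comm]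

lemma Monic.comp_X_sq [Nontrivial R] {p : R[X]} (hp : p.Monic) : (p.comp (X ^ 2)).Monic :=
  hp.comp (monic_X_pow 2) (by simp)

lemma Monic.add_of_natDegree_ne {p q : R[X]} (hp : p.Monic) (hq : q.Monic)
    (h : p.natDegree ≠ q.natDegree) :
    (p + q).Monic ∧ (p + q).natDegree = max p.natDegree q.natDegree := by
  rcases h.lt_or_gt with hlt | hlt
  · exact ⟨hq.add_of_right (degree_lt_degree hlt),
      by rw [natDegree_add_eq_right_of_natDegree_lt hlt, max_eq_right hlt.le]⟩
  · exact ⟨hp.add_of_left (degree_lt_degree hlt),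
      by rw [natDegree_add_eq_left_of_natDegree_lt hlt, max_eq_left hlt.le]⟩

end Polynomial

@[simp] lemma stern_zero : stern 0 = 0 := by simp [stern]

@[simp] lemma stern_one : stern 1 = 1 := by simp [stern]

lemma stern_two_mul (k : ℕ) : stern (2 * k) = (stern k).comp (X ^ 2) := by
  cases k with
  | zero => simp
  | succ k =>
    rw [show 2 * (k + 1) = 2 * k + 2 by ring, stern]
    simp

lemma stern_two_mul_add_one (k : ℕ) :
    stern (2 * k + 1) = X * (stern k).comp (X ^ 2) + (stern (k + 1)).comp (X ^ 2) := by
  cases k with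
  | zero => simp
  | succ k =>
    rw [show 2 * (k + 1) + 1 = (2 * k + 1) + 2 by ring, stern]
    have hmod : (2 * k + 1) % 2 = 1 := by omega
    have hdiv : (2 * k + 1) / 2 = k := by omega
    simp [hmod, hdiv]

lemma padicValNat_two_eq_zero_or_succ_eq_zero (k : ℕ) :
    padicValNat 2 k = 0 ∨ padicValNat 2 (k + 1) = 0 := by
  rcases k.even_or_odd with ⟨j, rfl⟩ | ⟨j, rfl⟩
  · exact .inr (padicValNat.eq_zero_of_not_dvd (by omega))
  · exact .inl (padicValNat.eq_zero_of_not_dvd (by omega))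

theorem stern_monic_and_two_mul_natDegree_add_two_pow (n : ℕ) (hn : n ≠ 0) :
    (stern n).Monic ∧ 2 * (stern n).natDegree + 2 ^ padicValNat 2 n = n := by
  induction n using Nat.strong_induction_on with
  | _ n ih =>
  obtain ⟨k, rfl | rfl⟩ := n.even_or_odd'
  · have hk : k ≠ 0 := by omega
    obtain ⟨hmon, hdeg⟩ := ih k (by omega) hk
    rw [stern_two_mul, padicValNat.mul two_ne_zero hk, padicValNat.self one_lt_two]
    refine ⟨hmon.comp_X_sq, ?_⟩
    rw [natDegree_comp_X_sq, pow_add]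
    omega
  · rcases Nat.eq_zero_or_pos k with rfl | hk
    · simp
    obtain ⟨hmonA, hdegA⟩ := ih k (by omega) hk.ne'
    obtain ⟨hmonB, hdegB⟩ := ih (k + 1) (by omega) (by omega)
    have hdegXA : (X * (stern k).comp (X ^ 2)).natDegree = 2 * (stern k).natDegree + 1 := by
      rw [natDegree_mul X_ne_zero hmonA.comp_X_sq.ne_zero, natDegree_X, natDegree_comp_X_sq,
        add_comm]
    obtain ⟨hmon, hdeg⟩ := (monic_X.mul hmonA.comp_X_sq).add_of_natDegree_ne hmonB.comp_X_sq
      (by rw [hdegXA, natDegree_comp_X_sq]; omega)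
    rw [stern_two_mul_add_one, padicValNat.eq_zero_of_not_dvd (by omega)]
    refine ⟨hmon, ?_⟩
    rw [hdeg, hdegXA, natDegree_comp_X_sq]
    have hposA := Nat.one_le_two_pow (n := padicValNat 2 k)
    have hposB := Nat.one_le_two_pow (n := padicValNat 2 (k + 1))
    rcases padicValNat_two_eq_zero_or_succ_eq_zero k with h | h
    · rw [h] at hdegA; omega
    · rw [h] at hdegB; omega

theorem stern_natDegree_general (n : ℕ) :
    (stern n).natDegree = (n - 2 ^ (padicValNat 2 n)) / 2 := by
  rcases Nat.eq_zero_or_pos n with rfl | hn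
  · simp
  have := (stern_monic_and_two_mul_natDegree_add_two_pow n hn.ne').2
  omega

theorem stern_natDegree (n : ℕ) (hn : 1 ≤ n) :
    (stern n).natDegree = (n - 2 ^ (padicValNat 2 n)) / 2 :=
  stern_natDegree_general n
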